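/- arXiv:2004.14835 — 3 statements merged into one kernel-verified Lean document; each statement's English description precedes it below -/
import Mathlib

section
/- If frames F_0, …, F_k satisfy the PrIC3 invariants (initiality F_0 = Φ(0); chain property F_i ≤ F_{i+1} for all i < k; frame safety F_i[s_I] ≤ λ for all i ≤ k; relative inductivity Φ(F_i) ≤ F_{i+1} for all i < k), then for every state s and every i ≤ k, the maximal i-step-bounded reachability probability satisfies Pr^max(s → ◊^{≤i} B) ≤ F_i[s]. -/
open scoped ENNReal BigOperators Classical
set_option linter.unusedSectionVars false

variable {S Act : Type*} [Fintype S] [Fintype Act]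

/-- A frame maps every state into the unit interval `[0,1]` (embedded in `ℝ≥0∞`). -/
def IsFrame {S : Type*} (F : S → ℝ≥0∞) : Prop := ∀ s, F s ≤ 1

/-- The actions enabled at a state: those with positive outgoing probability mass. -/
def enabled {S Act : Type*} (P : S → Act → S → ℝ≥0∞) (s : S) : Set Act :=
  {a | ∃ s', 0 < P s a s'}

/-- The Bellman operator of a (sub)stochastic transition function `P` with bad states `B`. -/
noncomputable def bellman (P : S → Act → S → ℝ≥0∞) (B : Set S) (F : S → ℝ≥0∞) : S → ℝ≥0∞ :=
  fun s => if s ∈ B then 1 else ⨆ a ∈ enabled P s, ∑ s', P s a s' * F s'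

theorem bellman_mono (P : S → Act → S → ℝ≥0∞) (B : Set S) : Monotone (bellman P B) := by
  intro F G h s
  unfold bellman
  split
  · exact le_rfl
  · exact iSup_mono fun a => iSup_mono fun _ =>
      Finset.sum_le_sum fun s' _ => by gcongr; exact h s'

/-- The Bellman operator as a monotone map on the complete lattice of frames. -/
noncomputable def bellmanHom (P : S → Act → S → ℝ≥0∞) (B : Set S) :
    (S → ℝ≥0∞) →o (S → ℝ≥0∞) := ⟨bellman P B, bellman_mono P B⟩

/-- The maximal reachability probability `Pr^max(s → ◊B)`,
as the least fixed point of the Bellman operator. -/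
noncomputable def prMax (P : S → Act → S → ℝ≥0∞) (B : Set S) : S → ℝ≥0∞ :=
  OrderHom.lfp (bellmanHom P B)

/-- A finite Markov decision process. -/
structure MDP (S Act : Type*) [Fintype S] [Fintype Act] where
  init : S
  P : S → Act → S → ℝ≥0∞
  stoch : ∀ s a, a ∈ enabled P s → ∑ s', P s a s' = 1
  exists_enabled : ∀ s, (enabled P s).Nonempty

/-- The PrIC3 invariants for frames `F 0, …, F k`: initiality, chain property,
frame safety, and relative inductivity. -/
def PrIC3Inv (M : MDP S Act) (B : Set S) (lam : ℝ≥0∞) (F : ℕ → S → ℝ≥0∞) (k : ℕ) : Prop :=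
  (F 0 = bellman M.P B (fun _ => 0)) ∧
  (∀ i < k, F i ≤ F (i+1)) ∧
  (∀ i ≤ k, F i M.init ≤ lam) ∧
  (∀ i < k, bellman M.P B (F i) ≤ F (i+1))

/-- The maximal `i`-step-bounded reachability probability `Pr^max(s → ◊^{≤i} B)`,
which equals `Φ^{i+1}(0)[s]`. -/
noncomputable def boundedReach (P : S → Act → S → ℝ≥0∞) (B : Set S) (i : ℕ) : S → ℝ≥0∞ :=
  (bellman P B)^[i+1] (fun _ => 0)

theorem boundedReach_zero (P : S → Act → S → ℝ≥0∞) (B : Set S) :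
    boundedReach P B 0 = bellman P B (fun _ => 0) :=
  rfl

theorem boundedReach_succ (P : S → Act → S → ℝ≥0∞) (B : Set S) (i : ℕ) :
    boundedReach P B (i + 1) = bellman P B (boundedReach P B i) :=
  Function.iterate_succ_apply' _ _ _

/-- the PrIC3 invariants imply that every frame overapproximates the
corresponding step-bounded reachability probabilities. -/
theorem pric3_inv_overapprox (M : MDP S Act) (B : Set S) (lam : ℝ≥0∞)
    (F : ℕ → S → ℝ≥0∞) (k : ℕ) (hinv : PrIC3Inv M B lam F k) :
    ∀ s, ∀ i ≤ k, boundedReach M.P B i s ≤ F i s := by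
  obtain ⟨hinit, -, -, hind⟩ := hinv
  intro s i hi
  exact (bellman_mono M.P B).seq_le_seq i (by rw [boundedReach_zero, hinit])
    (fun j _ => (boundedReach_succ M.P B j).le) (fun j hj => hind j (hj.trans_le hi)) s
end

section
/- If frames F_0, …, F_k satisfy the PrIC3 invariants and there exists i < k with F_i = F_{i+1}, then the maximal unbounded reachability probability from s_I satisfies Pr^max(s_I → ◊B) ≤ λ. -/
open scoped ENNReal BigOperators Classical
set_option linter.unusedSectionVars false

variable {S Act : Type*} [Fintype S] [Fintype Act]

theorem prMax_le_of_bellman_le {P : S → Act → S → ℝ≥0∞} {B : Set S} {F : S → ℝ≥0∞}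
    (hF : bellman P B F ≤ F) : prMax P B ≤ F :=
  OrderHom.lfp_le (bellmanHom P B) hF

theorem PrIC3Inv.bellman_le_of_frame_eq {M : MDP S Act} {B : Set S} {lam : ℝ≥0∞}
    {F : ℕ → S → ℝ≥0∞} {k i : ℕ} (hinv : PrIC3Inv M B lam F k) (hik : i < k)
    (hFi : F i = F (i+1)) : bellman M.P B (F i) ≤ F i :=
  hFi ▸ hinv.2.2.2 i hik

/-- PrIC3 invariants plus two equal consecutive frames imply safety. -/
theorem pric3_equal_frames_safe (M : MDP S Act) (B : Set S) (lam : ℝ≥0∞)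
    (F : ℕ → S → ℝ≥0∞) (k : ℕ) (hinv : PrIC3Inv M B lam F k)
    (heq : ∃ i < k, F i = F (i+1)) :
    prMax M.P B M.init ≤ lam := by
  obtain ⟨i, hik, hFi⟩ := heq
  calc prMax M.P B M.init ≤ F i M.init :=
        prMax_le_of_bellman_le (hinv.bellman_le_of_frame_eq hik hFi) M.init
    _ ≤ lam := hinv.2.2.1 i hik.le
end

section
/- Monotonicity of reachability probabilities under subsystems: if M' is a subMDP of M (induced by a subset S' of states containing s_I, with transition probabilities restricted to S' and missing mass treated as lost), then the maximal reachability probability of B ∩ S' in M' is at most the maximal reachability probability of B in M. Consequently, if the subMDP is unsafe (probability > λ), then M is unsafe. -/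
open scoped ENNReal BigOperators Classical
set_option linter.unusedSectionVars false

variable {S Act : Type*} [Fintype S] [Fintype Act]

/-- The transition function of the subMDP induced by a subset `S'` of states:
transitions are restricted to `S'`, missing probability mass is lost. -/
noncomputable def subP (P : S → Act → S → ℝ≥0∞) (S' : Set S) : S → Act → S → ℝ≥0∞ :=
  fun s a s' => if s ∈ S' ∧ s' ∈ S' then P s a s' else 0

/-! The restricted system is dominated by the original one at every state: inside `S'` it has
fewer transitions and fewer bad states, and a bad state of the original system that lies
outside `S'` is a dead end of the restricted one, where the Bellman operator gives `0 ≤ 1`.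
As `lfp` is monotone in the operator, the least fixed points compare in the same way. -/

section Bellman

variable {P P' : S → Act → S → ℝ≥0∞} {B B' : Set S}

theorem enabled_mono (hP : P' ≤ P) (s : S) : enabled P' s ⊆ enabled P s :=
  fun a ⟨s', hs'⟩ => ⟨s', hs'.trans_le (hP s a s')⟩

theorem enabled_eq_empty_of_eq_zero {s : S} (h : ∀ a s', P s a s' = 0) : enabled P s = ∅ :=
  Set.eq_empty_of_forall_notMem fun a ⟨s', hs'⟩ => hs'.ne' (h a s')

theorem bellman_le_bellman (hP : P' ≤ P) (hB : B' ⊆ B)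
    (hdead : ∀ s ∈ B, s ∉ B' → ∀ a s', P' s a s' = 0) (F : S → ℝ≥0∞) :
    bellman P' B' F ≤ bellman P B F := by
  intro s
  by_cases hsB' : s ∈ B'
  · simp [bellman, hsB', hB hsB']
  by_cases hsB : s ∈ B
  · simp [bellman, hsB, hsB', enabled_eq_empty_of_eq_zero (hdead s hsB hsB')]
  simp only [bellman, if_neg hsB, if_neg hsB']
  exact iSup₂_le fun a ha => le_iSup₂_of_le (f := fun a _ => ∑ s', P s a s' * F s') a
    (enabled_mono hP s ha) (Finset.sum_le_sum fun s' _ => by gcongr; exact hP s a s')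

theorem prMax_le_prMax (hP : P' ≤ P) (hB : B' ⊆ B)
    (hdead : ∀ s ∈ B, s ∉ B' → ∀ a s', P' s a s' = 0) : prMax P' B' ≤ prMax P B :=
  OrderHom.lfp.monotone (bellman_le_bellman hP hB hdead)

end Bellman

theorem subP_le (P : S → Act → S → ℝ≥0∞) (S' : Set S) : subP P S' ≤ P := by
  intro s a s'
  unfold subP
  split <;> simp

theorem subP_eq_zero_of_notMem (P : S → Act → S → ℝ≥0∞) {S' : Set S} {s : S} (hs : s ∉ S')
    (a : Act) (s' : S) : subP P S' s a s' = 0 := by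
  simp [subP, hs]

theorem prMax_subP_le (P : S → Act → S → ℝ≥0∞) (B S' : Set S) :
    prMax (subP P S') (B ∩ S') ≤ prMax P B :=
  prMax_le_prMax (subP_le P S') Set.inter_subset_left
    fun _ hsB hs => subP_eq_zero_of_notMem P fun hS' => hs ⟨hsB, hS'⟩

theorem subMDP_reachability_mono_general (M : MDP S Act) (B : Set S) (lam : ℝ≥0∞)
    (S' : Set S) :
    (∀ s, prMax (subP M.P S') (B ∩ S') s ≤ prMax M.P B s) ∧
    (lam < prMax (subP M.P S') (B ∩ S') M.init → lam < prMax M.P B M.init) :=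
  ⟨prMax_subP_le M.P B S', fun h => h.trans_le (prMax_subP_le M.P B S' M.init)⟩

/-- the maximal reachability probability in a subMDP is at most the one
in the full MDP; hence an unsafe subMDP witnesses unsafety of the MDP. -/
theorem subMDP_reachability_mono (M : MDP S Act) (B : Set S) (lam : ℝ≥0∞)
    (S' : Set S) (hinit : M.init ∈ S') :
    (∀ s, prMax (subP M.P S') (B ∩ S') s ≤ prMax M.P B s) ∧
    (lam < prMax (subP M.P S') (B ∩ S') M.init → lam < prMax M.P B M.init) :=
  subMDP_reachability_mono_general M B lam S'
end
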